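/- arXiv:2405.20941 — 4 statements merged into one kernel-verified Lean document; each statement's English description precedes it below -/
import Mathlib

section
/- Let g ≥ 1 and let τ be a complex symmetric g×g matrix whose imaginary part (the real matrix with entries Im τ_{ij}) is positive definite (a Siegel matrix). Then for every u ∈ ℂ^g the family over n ∈ ℤ^g of terms exp(2πi⟨u,n⟩)·exp(iπ⟨n,τn⟩) is absolutely summable, where ⟨u,n⟩ = Σ_i u_i n_i and ⟨n,τn⟩ = Σ_{i,j} n_i τ_{ij} n_j. In particular the Riemann theta function Θ(u,τ) = Σ_{n∈ℤ^g} exp(2πi⟨u,n⟩)·exp(iπ⟨n,τn⟩) is well defined for all u ∈ ℂ^g. -/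
/-!
Positive definiteness of `Im τ` gives `c > 0` with `Im τ ≥ c · 1` (minimise the quadratic form
on the unit sphere). Hence the modulus of the `n`-th term is at most that of the `n`-th term of
the theta series of the diagonal matrix `c i · 1`, which factors as a product over coordinates of
terms of the one-variable Jacobi theta series `θ(u_i, c i)`; these are absolutely summable, and so
is a product of nonnegative summable families over `ℤ^g`.
-/

open Matrix Finset Complex Real

theorem summable_prod_apply_of_nonneg {ι : Type*} [Fintype ι] {β : ι → Type*}
    {f : (i : ι) → β i → ℝ} (hf : ∀ i, 0 ≤ f i) (hs : ∀ i, Summable (f i)) :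
    Summable fun x : (i : ι) → β i => ∏ i, f i (x i) := by
  classical
  refine summable_of_sum_le (c := ∏ i, ∑' b, f i b)
    (fun x => prod_nonneg fun i _ => hf i (x i)) fun s => ?_
  calc ∑ x ∈ s, ∏ i, f i (x i)
      ≤ ∑ x ∈ Fintype.piFinset fun i => s.image (· i), ∏ i, f i (x i) :=
        sum_le_sum_of_subset_of_nonneg (fun x hx => Fintype.mem_piFinset.2 fun i =>
          mem_image_of_mem _ hx) fun x _ _ => prod_nonneg fun i _ => hf i (x i)
    _ = ∏ i, ∑ b ∈ s.image (· i), f i b := (prod_univ_sum _ _).symm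
    _ ≤ ∏ i, ∑' b, f i b := prod_le_prod (fun i _ => sum_nonneg fun b _ => hf i b)
        fun i _ => (hs i).sum_le_tsum _ fun b _ => hf i b

theorem Matrix.PosDef.exists_pos_mul_dotProduct_self_le {n : Type*} [Fintype n]
    {Y : Matrix n n ℝ} (hY : Y.PosDef) :
    ∃ c > 0, ∀ x : n → ℝ, c * (x ⬝ᵥ x) ≤ x ⬝ᵥ Y *ᵥ x := by
  set Q : EuclideanSpace ℝ n → ℝ := fun y => y.ofLp ⬝ᵥ Y *ᵥ y.ofLp
  have Q_smul (t : ℝ) (y : EuclideanSpace ℝ n) : Q (t • y) = t ^ 2 * Q y := by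
    simp only [Q, WithLp.ofLp_smul, mulVec_smul, smul_dotProduct, dotProduct_smul, smul_eq_mul]
    ring
  obtain ⟨c, hc, hcQ⟩ := (isCompact_sphere (0 : EuclideanSpace ℝ n) 1).exists_forall_le'
    (by fun_prop : Continuous Q).continuousOn (a := 0) fun y hy =>
      hY.dotProduct_mulVec_pos <| by simpa using Metric.ne_of_mem_sphere hy one_ne_zero
  refine ⟨c, hc, fun x => ?_⟩
  rcases eq_or_ne x 0 with rfl | hx
  · simp
  set y : EuclideanSpace ℝ n := WithLp.toLp 2 x
  have hy : 0 < ‖y‖ := by simpa [y] using hx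
  have hyx : ‖y‖ ^ 2 = x ⬝ᵥ x := by
    rw [EuclideanSpace.real_norm_sq_eq]
    simp [y, dotProduct, sq]
  have hcy := hcQ (‖y‖⁻¹ • y) (by simp [norm_smul, hy.ne'])
  rwa [Q_smul, inv_pow, le_inv_mul_iff₀ (by positivity), hyx, mul_comm] at hcy

theorem re_theta_exponent {ι : Type*} [Fintype ι] (u : ι → ℂ) (τ : Matrix ι ι ℂ) (x : ι → ℝ) :
    (2 * π * I * ∑ i, u i * (x i : ℂ) + π * I * ∑ i, ∑ j, (x i : ℂ) * τ i j * (x j : ℂ)).re =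
      -(2 * π * ∑ i, (u i).im * x i) - π * (x ⬝ᵥ (of fun i j => (τ i j).im) *ᵥ x) := by
  simp [Complex.mul_re, Complex.mul_im, re_sum, dotProduct, mulVec, mul_sum, mul_assoc,
    sub_eq_add_neg]

theorem norm_exp_mul_exp_le_prod_norm_jacobiTheta₂_term {ι : Type*} [Fintype ι]
    {τ : Matrix ι ι ℂ} {c : ℝ}
    (hc : ∀ x : ι → ℝ, c * (x ⬝ᵥ x) ≤ x ⬝ᵥ (of fun i j => (τ i j).im) *ᵥ x)
    (u : ι → ℂ) (n : ι → ℤ) :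
    ‖Complex.exp (2 * π * I * ∑ i, u i * (n i : ℂ)) *
        Complex.exp (π * I * ∑ i, ∑ j, (n i : ℂ) * τ i j * (n j : ℂ))‖ ≤
      ∏ i, ‖jacobiTheta₂_term (n i) (u i) (c * I)‖ := by
  set x : ι → ℝ := fun i => n i
  have hre := re_theta_exponent u τ x
  push_cast [x] at hre
  rw [← Complex.exp_add, Complex.norm_exp, hre]
  simp only [norm_jacobiTheta₂_term, mul_I_im, ofReal_re, ← Real.exp_sum, Real.exp_le_exp]
  calc _ ≤ -(2 * π * ∑ i, (u i).im * x i) - π * (c * (x ⬝ᵥ x)) := by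
        gcongr
        exact hc x
    _ = _ := by
        simp only [dotProduct, mul_sum, ← sum_neg_distrib, ← sum_sub_distrib]
        exact sum_congr rfl fun i _ => by ring

theorem riemann_theta_series_absolutely_summable_general
    (g : ℕ) (τ : Matrix (Fin g) (Fin g) ℂ)
    (hpos : (Matrix.of fun i j => (τ i j).im).PosDef) :
    ∀ u : Fin g → ℂ,
      Summable (fun n : Fin g → ℤ =>
        ‖Complex.exp (2 * Real.pi * Complex.I * ∑ i, u i * (n i : ℂ)) *
          Complex.exp (Real.pi * Complex.I *
            ∑ i, ∑ j, (n i : ℂ) * τ i j * (n j : ℂ))‖) := by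
  intro u
  obtain ⟨c, hc, hcτ⟩ := hpos.exists_pos_mul_dotProduct_self_le
  have hθ (i : Fin g) : Summable fun m : ℤ => ‖jacobiTheta₂_term m (u i) (c * I)‖ :=
    ((summable_jacobiTheta₂_term_iff _ _).2 (by simpa using hc)).norm
  exact (summable_prod_apply_of_nonneg (fun i m => norm_nonneg _) hθ).of_nonneg_of_le
    (fun n => norm_nonneg _) (norm_exp_mul_exp_le_prod_norm_jacobiTheta₂_term hcτ u)

/-- Absolute convergence of the Riemann theta series for a Siegel
matrix `τ` (symmetric with positive definite imaginary part): for every `u ∈ ℂ^g`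
the family `n ↦ exp(2πi⟨u,n⟩)·exp(iπ⟨n,τn⟩)`, `n ∈ ℤ^g`, is absolutely summable,
so the theta function `Θ(u,τ)` is well defined. -/
theorem riemann_theta_series_absolutely_summable
    (g : ℕ) (hg : 1 ≤ g) (τ : Matrix (Fin g) (Fin g) ℂ)
    (hsymm : τ.IsSymm)
    (hpos : (Matrix.of fun i j => (τ i j).im).PosDef) :
    ∀ u : Fin g → ℂ,
      Summable (fun n : Fin g → ℤ =>
        ‖Complex.exp (2 * Real.pi * Complex.I * ∑ i, u i * (n i : ℂ)) *
          Complex.exp (Real.pi * Complex.I *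
            ∑ i, ∑ j, (n i : ℂ) * τ i j * (n j : ℂ))‖) :=
  riemann_theta_series_absolutely_summable_general g τ hpos
end

section
/- For every q, z ∈ ℂ with 0 < |q| < 1 and z ≠ 0, one has Σ_{n∈ℤ} z^n q^{n²} = Π_{n=1}^∞ (1 + z·q^{2n−1})·(1 + z^{−1}·q^{2n−1})·(1 − q^{2n}), where the series converges absolutely and the product converges. In particular, for τ in the upper half-plane, q = exp(iπτ) and z = exp(2πiu), this gives the product formula Θ(u,τ) = Π_{n≥1}(1+e^{2πiu}q^{2n−1})(1+e^{−2πiu}q^{2n−1})(1−q^{2n}) for the genus-one Riemann theta function Θ(u,τ) = Σ_{n∈ℤ} e^{2πinu} e^{iπτn²}. -/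
/-!
By the q-binomial theorem, `∏_{j<n} (1 + x q^{2j+1}) = ∑_k [n, k]_{q²} q^{k²} x^k`. Taking
`n = 2N`, `x = z q^{-2N}` and pairing the factors `j` and `2N - 1 - j` turns this into the finite
triple product
`∏_{j<N} (1 + z q^{2j+1})(1 + z⁻¹ q^{2j+1})(1 - q^{2j+2}) = ∑_{|m| ≤ N} c_N(m) z^m q^{m²}`,
where, with `t = q²` and `(t; t)_n = ∏_{i<n} (1 - t^{i+1})`,
`c_N(m) = (t; t)_N [2N, N + m]_t = (t; t)_N (t; t)_{2N} / ((t; t)_{N+m} (t; t)_{N-m})`.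
Since `(t; t)_n` converges to a nonzero limit, `c_N(m) → 1` for each `m` and the `c_N(m)` are
uniformly bounded, so Tannery's theorem lets `N → ∞` inside the sum, which is dominated by the
absolutely convergent theta series.
-/

open Finset Filter Topology

section Algebra

variable {R : Type*} [CommRing R]

def qBinom (t : R) : ℕ → ℕ → R
  | _, 0 => 1
  | 0, _ + 1 => 0
  | n + 1, k + 1 => qBinom t n (k + 1) + t ^ (n - k) * qBinom t n k

def qPochhammer (t : R) (n : ℕ) : R := ∏ i ∈ range n, (1 - t ^ (i + 1))

@[simp] lemma qBinom_zero_right (t : R) (n : ℕ) : qBinom t n 0 = 1 := by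
  cases n <;> rfl

lemma qBinom_succ_succ (t : R) (n k : ℕ) :
    qBinom t (n + 1) (k + 1) = qBinom t n (k + 1) + t ^ (n - k) * qBinom t n k := rfl

lemma qBinom_eq_zero_of_lt (t : R) {n k : ℕ} (h : n < k) : qBinom t n k = 0 := by
  induction n generalizing k with
  | zero =>
    obtain ⟨k, rfl⟩ := Nat.exists_eq_add_one_of_ne_zero h.ne'
    rfl
  | succ n ih =>
    obtain ⟨k, rfl⟩ := Nat.exists_eq_add_one_of_ne_zero (Nat.ne_zero_of_lt h)
    rw [qBinom_succ_succ, ih (by omega), ih (by omega), mul_zero, add_zero]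

lemma qPochhammer_succ (t : R) (n : ℕ) :
    qPochhammer t (n + 1) = qPochhammer t n * (1 - t ^ (n + 1)) :=
  prod_range_succ _ _

lemma qBinom_mul_qPochhammer_mul_qPochhammer (t : R) {n k : ℕ} (h : k ≤ n) :
    qBinom t n k * qPochhammer t k * qPochhammer t (n - k) = qPochhammer t n := by
  induction n generalizing k with
  | zero =>
    obtain rfl := Nat.le_zero.1 h
    simp [qPochhammer]
  | succ n ih =>
    rcases k with _ | k
    · simp [qPochhammer]
    rw [qBinom_succ_succ, Nat.add_sub_add_right]
    rcases (Nat.le_of_lt_succ h).lt_or_eq with hk | rfl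
    · obtain ⟨d, rfl⟩ := Nat.exists_eq_add_of_lt hk
      have h₁ := ih (k := k + 1) (by omega)
      have h₂ := ih (k := k) (by omega)
      rw [show k + d + 1 - (k + 1) = d by omega, qPochhammer_succ t k] at h₁
      rw [show k + d + 1 - k = d + 1 by omega, qPochhammer_succ t d] at h₂
      rw [show k + d + 1 - k = d + 1 by omega, qPochhammer_succ t (k + d + 1),
        qPochhammer_succ t k, qPochhammer_succ t d]
      linear_combination (1 - t ^ (d + 1)) * h₁ + t ^ (d + 1) * (1 - t ^ (k + 1)) * h₂
    · have hk := ih (le_refl k)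
      rw [qBinom_eq_zero_of_lt t (lt_add_one k), Nat.sub_self] at *
      rw [qPochhammer_succ t k]
      simp only [qPochhammer, range_zero, prod_empty, pow_zero] at hk ⊢
      linear_combination (1 - t ^ (k + 1)) * hk

theorem prod_range_one_add_eq_sum_qBinom (q x : R) (n : ℕ) :
    ∏ j ∈ range n, (1 + x * q ^ (2 * j + 1)) =
      ∑ k ∈ range (n + 1), qBinom (q ^ 2) n k * q ^ k ^ 2 * x ^ k := by
  induction n with
  | zero => simp
  | succ n ih =>
    have shift : ∑ k ∈ range (n + 1), qBinom (q ^ 2) n (k + 1) * q ^ (k + 1) ^ 2 * x ^ (k + 1)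
        + 1 = ∑ k ∈ range (n + 1), qBinom (q ^ 2) n k * q ^ k ^ 2 * x ^ k := by
      rw [sum_range_succ, qBinom_eq_zero_of_lt _ (lt_add_one n), sum_range_succ' _ n]
      simp
    have tilt : ∑ k ∈ range (n + 1), (q ^ 2) ^ (n - k) * qBinom (q ^ 2) n k * q ^ (k + 1) ^ 2
        * x ^ (k + 1) = x * q ^ (2 * n + 1) *
          ∑ k ∈ range (n + 1), qBinom (q ^ 2) n k * q ^ k ^ 2 * x ^ k := by
      rw [mul_sum]
      refine sum_congr rfl fun k hk => ?_
      obtain ⟨d, rfl⟩ := Nat.exists_eq_add_of_le (Nat.lt_succ_iff.1 (mem_range.1 hk))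
      rw [Nat.add_sub_cancel_left]
      ring
    rw [prod_range_succ, ih, sum_range_succ' _ (n + 1)]
    simp only [qBinom_succ_succ, add_mul, sum_add_distrib, qBinom_zero_right]
    linear_combination -shift - tilt

def jacobiCoeff (t : R) (N : ℕ) (m : ℤ) : R :=
  if -(N : ℤ) ≤ m ∧ m ≤ N then qPochhammer t N * qBinom t (2 * N) (m + N).toNat else 0

end Algebra

lemma sum_range_two_mul_add_one (n : ℕ) : ∑ j ∈ range n, (2 * j + 1) = n ^ 2 := by
  induction n with
  | zero => simp
  | succ n ih => rw [sum_range_succ, ih]; ring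

lemma sum_Icc_neg_eq_sum_range {M : Type*} [AddCommMonoid M] (g : ℤ → M) (N : ℕ) :
    ∑ m ∈ Icc (-(N : ℤ)) N, g m = ∑ k ∈ range (2 * N + 1), g (k - N) := by
  refine sum_nbij' (fun m => (m + N).toNat) (fun k => (k : ℤ) - N) ?_ ?_ ?_ ?_ ?_ <;>
    intro a ha <;> simp only [mem_Icc, mem_range] at ha ⊢
  any_goals omega
  congr 1
  omega

section Field

variable {K : Type*} [Field K]

lemma prod_range_reflect_one_add_div_pow_mul_pow {q z : K} (hq : q ≠ 0) (hz : z ≠ 0) (N : ℕ) :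
    ∏ j ∈ range N, (1 + z / q ^ (2 * N) * q ^ (2 * j + 1)) =
      z ^ N / q ^ N ^ 2 * ∏ j ∈ range N, (1 + z⁻¹ * q ^ (2 * j + 1)) := by
  have factor : ∀ j ∈ range N, 1 + z / q ^ (2 * N) * q ^ (2 * j + 1) =
      z * q ^ (2 * j + 1) / q ^ (2 * N) * (1 + z⁻¹ * q ^ (2 * (N - 1 - j) + 1)) := by
    intro j hj
    have hpow : q ^ (2 * j + 1) * q ^ (2 * (N - 1 - j) + 1) = q ^ (2 * N) := by
      rw [← pow_add]
      have := mem_range.1 hj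
      congr 1
      omega
    field_simp
    linear_combination -hpow
  rw [prod_congr rfl factor, prod_mul_distrib,
    prod_range_reflect (fun j => 1 + z⁻¹ * q ^ (2 * j + 1)), prod_div_distrib, prod_mul_distrib,
    prod_pow_eq_pow_sum, sum_range_two_mul_add_one, prod_const, prod_const, card_range, ← pow_mul,
    show 2 * N * N = N ^ 2 + N ^ 2 by ring, pow_add]
  field_simp

lemma prod_range_one_add_mul_one_add_inv_mul {q z : K} (hq : q ≠ 0) (hz : z ≠ 0) (N : ℕ) :
    ∏ j ∈ range N, (1 + z * q ^ (2 * j + 1)) * (1 + z⁻¹ * q ^ (2 * j + 1)) =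
      q ^ N ^ 2 / z ^ N * ∏ j ∈ range (2 * N), (1 + z / q ^ (2 * N) * q ^ (2 * j + 1)) := by
  have upper : ∏ j ∈ range N, (1 + z / q ^ (2 * N) * q ^ (2 * (N + j) + 1)) =
      ∏ j ∈ range N, (1 + z * q ^ (2 * j + 1)) := by
    refine prod_congr rfl fun j _ => ?_
    rw [show 2 * (N + j) + 1 = 2 * N + (2 * j + 1) by ring, pow_add]
    field_simp
  rw [two_mul N, prod_range_add, ← two_mul, upper,
    prod_range_reflect_one_add_div_pow_mul_pow hq hz, prod_mul_distrib]
  field_simp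

theorem prod_range_jacobi_eq_sum_jacobiCoeff {q z : K} (hq : q ≠ 0) (hz : z ≠ 0) (N : ℕ) :
    ∏ j ∈ range N,
        (1 + z * q ^ (2 * j + 1)) * (1 + z⁻¹ * q ^ (2 * j + 1)) * (1 - q ^ (2 * (j + 1))) =
      ∑ m ∈ Icc (-(N : ℤ)) N, jacobiCoeff (q ^ 2) N m * (z ^ m * q ^ m ^ 2) := by
  have hpoch : ∏ j ∈ range N, (1 - q ^ (2 * (j + 1))) = qPochhammer (q ^ 2) N := by
    simp only [qPochhammer, pow_mul]
  rw [prod_mul_distrib, hpoch, prod_range_one_add_mul_one_add_inv_mul hq hz,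
    prod_range_one_add_eq_sum_qBinom, sum_Icc_neg_eq_sum_range, mul_sum, sum_mul]
  refine sum_congr rfl fun k hk => ?_
  have hmem : -(N : ℤ) ≤ k - N ∧ (k : ℤ) - N ≤ N := by
    rw [mem_range] at hk
    omega
  have hsq : ((k : ℤ) - N) ^ 2 = ((k ^ 2 + N ^ 2 : ℕ) : ℤ) - ((2 * N * k : ℕ) : ℤ) := by
    push_cast
    ring
  rw [jacobiCoeff, if_pos hmem, show ((k : ℤ) - N + N).toNat = k by omega, zpow_sub₀ hz, hsq,
    zpow_sub₀ hq]
  simp only [zpow_natCast, div_pow, ← pow_mul, pow_add]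
  field_simp

end Field

section Analysis

open Complex
open scoped Real

lemma summable_norm_mul_pow {q : ℂ} (hq : ‖q‖ < 1) (c : ℂ) {e : ℕ → ℕ} (he : ∀ n, n ≤ e n) :
    Summable fun n => ‖c * q ^ e n‖ := by
  refine ((summable_geometric_of_lt_one (norm_nonneg q) hq).mul_left ‖c‖).of_nonneg_of_le
    (fun _ => norm_nonneg _) fun n => ?_
  rw [norm_mul, norm_pow]
  exact mul_le_mul_of_nonneg_left (pow_le_pow_of_le_one (norm_nonneg q) hq.le (he n))
    (norm_nonneg c)

lemma multipliable_jacobi {q : ℂ} (hq : ‖q‖ < 1) (z : ℂ) :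
    Multipliable fun n : ℕ =>
      (1 + z * q ^ (2 * n + 1)) * (1 + z⁻¹ * q ^ (2 * n + 1)) * (1 - q ^ (2 * (n + 1))) := by
  have h₁ := multipliable_one_add_of_summable
    (summable_norm_mul_pow hq z (e := fun n => 2 * n + 1) fun n => by omega)
  have h₂ := multipliable_one_add_of_summable
    (summable_norm_mul_pow hq z⁻¹ (e := fun n => 2 * n + 1) fun n => by omega)
  have h₃ := multipliable_one_add_of_summable
    (summable_norm_mul_pow hq (-1) (e := fun n => 2 * (n + 1)) fun n => by omega)
  exact ((h₁.mul h₂).mul h₃).congr fun n => by simp [← sub_eq_add_neg]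

section qPochhammer

variable {t : ℂ}

lemma one_sub_pow_succ_ne_zero (ht : ‖t‖ < 1) (i : ℕ) : 1 - t ^ (i + 1) ≠ 0 := by
  rw [sub_ne_zero]
  intro h
  have := congrArg norm h
  rw [norm_one, norm_pow] at this
  exact (pow_lt_one₀ (norm_nonneg t) ht (Nat.succ_ne_zero i)).ne' this

lemma qPochhammer_ne_zero (ht : ‖t‖ < 1) (n : ℕ) : qPochhammer t n ≠ 0 :=
  prod_ne_zero_iff.2 fun i _ => one_sub_pow_succ_ne_zero ht i

lemma summable_norm_neg_pow_succ (ht : ‖t‖ < 1) : Summable fun i : ℕ => ‖-t ^ (i + 1)‖ := by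
  simpa using summable_norm_mul_pow ht (-1) (e := (· + 1)) Nat.le_succ

lemma tendsto_qPochhammer (ht : ‖t‖ < 1) :
    Tendsto (qPochhammer t) atTop (𝓝 (∏' i : ℕ, (1 - t ^ (i + 1)))) := by
  have h := (multipliable_one_add_of_summable (summable_norm_neg_pow_succ ht)).hasProd
    |>.tendsto_prod_nat
  simp only [← sub_eq_add_neg] at h
  exact h

lemma tprod_one_sub_pow_succ_ne_zero (ht : ‖t‖ < 1) : ∏' i : ℕ, (1 - t ^ (i + 1)) ≠ 0 := by
  simpa [← sub_eq_add_neg] using tprod_one_add_ne_zero_of_summable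
    (by simpa [← sub_eq_add_neg] using one_sub_pow_succ_ne_zero ht) (summable_norm_neg_pow_succ ht)

lemma exists_norm_qPochhammer_le (ht : ‖t‖ < 1) :
    ∃ C, ∀ n, ‖qPochhammer t n‖ ≤ C ∧ ‖(qPochhammer t n)⁻¹‖ ≤ C := by
  obtain ⟨A, hA⟩ := (Metric.isBounded_range_of_tendsto _ (tendsto_qPochhammer ht)).exists_norm_le
  obtain ⟨B, hB⟩ := (Metric.isBounded_range_of_tendsto _
    ((tendsto_qPochhammer ht).inv₀ (tprod_one_sub_pow_succ_ne_zero ht))).exists_norm_le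
  exact ⟨max A B, fun n => ⟨(hA _ (Set.mem_range_self n)).trans (le_max_left _ _),
    (hB _ (Set.mem_range_self n)).trans (le_max_right _ _)⟩⟩

lemma qBinom_eq_div (ht : ‖t‖ < 1) {n k : ℕ} (h : k ≤ n) :
    qBinom t n k = qPochhammer t n / (qPochhammer t k * qPochhammer t (n - k)) := by
  rw [eq_div_iff (mul_ne_zero (qPochhammer_ne_zero ht k) (qPochhammer_ne_zero ht _)), ← mul_assoc]
  exact qBinom_mul_qPochhammer_mul_qPochhammer t h

lemma jacobiCoeff_eq_div (ht : ‖t‖ < 1) {N : ℕ} {m : ℤ} (hm : -(N : ℤ) ≤ m ∧ m ≤ N) :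
    jacobiCoeff t N m = qPochhammer t N * qPochhammer t (2 * N) /
      (qPochhammer t (m + N).toNat * qPochhammer t (N - m).toNat) := by
  rw [jacobiCoeff, if_pos hm, qBinom_eq_div ht (by omega),
    show 2 * N - (m + N).toNat = (N - m).toNat by omega, mul_div_assoc]

lemma tendsto_jacobiCoeff (ht : ‖t‖ < 1) (m : ℤ) :
    Tendsto (jacobiCoeff t · m) atTop (𝓝 1) := by
  have hD := tendsto_qPochhammer ht
  have hE := tprod_one_sub_pow_succ_ne_zero ht
  have h₁ : Tendsto (fun N : ℕ => 2 * N) atTop atTop :=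
    tendsto_atTop_atTop.2 fun b => ⟨b, fun N hN => by omega⟩
  have h₂ : Tendsto (fun N : ℕ => (m + N).toNat) atTop atTop :=
    tendsto_atTop_atTop.2 fun b => ⟨b + m.natAbs, fun N hN => by omega⟩
  have h₃ : Tendsto (fun N : ℕ => (N - m).toNat) atTop atTop :=
    tendsto_atTop_atTop.2 fun b => ⟨b + m.natAbs, fun N hN => by omega⟩
  have hlim := (hD.mul (hD.comp h₁)).div ((hD.comp h₂).mul (hD.comp h₃)) (mul_ne_zero hE hE)
  rw [div_self (mul_ne_zero hE hE)] at hlim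
  refine hlim.congr' ?_
  filter_upwards [eventually_ge_atTop m.natAbs] with N hN
  exact (jacobiCoeff_eq_div ht (N := N) (m := m) (by omega)).symm

lemma exists_norm_jacobiCoeff_le (ht : ‖t‖ < 1) : ∃ C, ∀ N m, ‖jacobiCoeff t N m‖ ≤ C := by
  obtain ⟨C, hC⟩ := exists_norm_qPochhammer_le ht
  have hC0 : 0 ≤ C := (norm_nonneg _).trans (hC 0).1
  refine ⟨C * C * (C * C), fun N m => ?_⟩
  by_cases hm : -(N : ℤ) ≤ m ∧ m ≤ N
  · rw [jacobiCoeff_eq_div ht hm, div_eq_mul_inv, mul_inv]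
    simp only [norm_mul]
    gcongr <;> simp only [hC]
  · rw [jacobiCoeff, if_neg hm, norm_zero]
    positivity

end qPochhammer

lemma zpow_mul_zpow_sq_eq_jacobiTheta₂_term {q z : ℂ} (hq : q ≠ 0) (hz : z ≠ 0) (n : ℤ) :
    z ^ n * q ^ n ^ 2 = jacobiTheta₂_term n (log z / (2 * π * I)) (log q / (π * I)) := by
  rw [jacobiTheta₂_term, exp_add,
    show 2 * π * I * n * (log z / (2 * π * I)) = n * log z by field_simp,
    show π * I * n ^ 2 * (log q / (π * I)) = ((n ^ 2 : ℤ) : ℂ) * log q by push_cast; field_simp,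
    exp_int_mul, exp_int_mul, exp_log hz, exp_log hq]

lemma im_log_div_pi_mul_I_pos {q : ℂ} (h0 : 0 < ‖q‖) (h1 : ‖q‖ < 1) :
    0 < (log q / (π * I)).im := by
  have him : (log q / (π * I)).im = -Real.log ‖q‖ / π := by
    simp [div_eq_mul_inv, mul_comm, log_re]
  rw [him]
  exact div_pos (neg_pos.2 (Real.log_neg h0 h1)) Real.pi_pos

lemma summable_norm_zpow_mul_zpow_sq {q z : ℂ} (h0 : 0 < ‖q‖) (h1 : ‖q‖ < 1) (hz : z ≠ 0) :
    Summable fun n : ℤ => ‖z ^ n * q ^ n ^ 2‖ := by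
  simp only [zpow_mul_zpow_sq_eq_jacobiTheta₂_term (norm_pos_iff.1 h0) hz]
  exact summable_norm_iff.2 ((summable_jacobiTheta₂_term_iff _ _).2 (im_log_div_pi_mul_I_pos h0 h1))

theorem tendsto_prod_range_jacobi {q z : ℂ} (h0 : 0 < ‖q‖) (h1 : ‖q‖ < 1) (hz : z ≠ 0) :
    Tendsto (fun N => ∏ j ∈ range N,
        (1 + z * q ^ (2 * j + 1)) * (1 + z⁻¹ * q ^ (2 * j + 1)) * (1 - q ^ (2 * (j + 1))))
      atTop (𝓝 (∑' n : ℤ, z ^ n * q ^ n ^ 2)) := by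
  have ht : ‖q ^ 2‖ < 1 := by
    rw [norm_pow]
    exact pow_lt_one₀ (norm_nonneg q) h1 two_ne_zero
  obtain ⟨C, hC⟩ := exists_norm_jacobiCoeff_le ht
  have hfinite : ∀ N : ℕ, ∑' m : ℤ, jacobiCoeff (q ^ 2) N m * (z ^ m * q ^ m ^ 2) =
      ∏ j ∈ range N,
        (1 + z * q ^ (2 * j + 1)) * (1 + z⁻¹ * q ^ (2 * j + 1)) * (1 - q ^ (2 * (j + 1))) := by
    intro N
    rw [prod_range_jacobi_eq_sum_jacobiCoeff (norm_pos_iff.1 h0) hz, tsum_eq_sum]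
    intro m hm
    rw [jacobiCoeff, if_neg (by simpa using hm), zero_mul]
  have hlim := tendsto_tsum_of_dominated_convergence
    ((summable_norm_zpow_mul_zpow_sq h0 h1 hz).mul_left C)
    (fun m => by simpa using (tendsto_jacobiCoeff ht m).mul_const (z ^ m * q ^ m ^ 2))
    (Eventually.of_forall fun N m => by
      rw [norm_mul]
      exact mul_le_mul_of_nonneg_right (hC N m) (norm_nonneg _))
  simpa only [hfinite] using hlim

end Analysis

/-- The Jacobi triple product: for `0 < |q| < 1` and `z ≠ 0`,
`Σ_{n∈ℤ} z^n q^{n²} = Π_{n≥1} (1 + z q^{2n−1})(1 + z⁻¹ q^{2n−1})(1 − q^{2n})`,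
the series converging absolutely and the product converging. In particular with
`q = e^{iπτ}`, `z = e^{2πiu}` this is the product formula for the genus-one
Riemann theta function. -/
theorem jacobi_triple_product
    (q z : ℂ) (h0 : 0 < ‖q‖) (h1 : ‖q‖ < 1) (hz : z ≠ 0) :
    Summable (fun n : ℤ => ‖z ^ n * q ^ (n ^ 2)‖) ∧
    Multipliable (fun n : ℕ =>
      (1 + z * q ^ (2 * n + 1)) * (1 + z⁻¹ * q ^ (2 * n + 1)) * (1 - q ^ (2 * (n + 1)))) ∧
    ∑' n : ℤ, z ^ n * q ^ (n ^ 2)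
      = ∏' n : ℕ,
          (1 + z * q ^ (2 * n + 1)) * (1 + z⁻¹ * q ^ (2 * n + 1)) *
            (1 - q ^ (2 * (n + 1))) :=
  have hmul := multipliable_jacobi h1 z
  ⟨summable_norm_zpow_mul_zpow_sq h0 h1 hz, hmul,
    tendsto_nhds_unique (tendsto_prod_range_jacobi h0 h1 hz) hmul.hasProd.tendsto_prod_nat⟩
end

section
/- Let U ⊆ ℂ be open, z₀ ∈ U, and let f : ℂ → ℂ be holomorphic on U with f′(z₀) ≠ 0. Then the limit as z → z₀ (z ≠ z₀) of f′(z)·f′(z₀)/(f(z) − f(z₀))² − 1/(z − z₀)² exists and equals (1/6)·{f, z₀}, where {f, z} = f′′′(z)/f′(z) − (3/2)·(f′′(z)/f′(z))² is the Schwarzian derivative of f at z. -/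
/-!
Off `z₀` the expression is the derivative of `φ z = (z - z₀)⁻¹ - f'(z₀) / (f z - f z₀)`.
Writing `f z - f z₀ = (z - z₀) g z` with `g = dslope f z₀` shows
`φ = dslope g z₀ / g`, which is analytic at `z₀` because `g z₀ = f'(z₀) ≠ 0`. Hence the limit is
`φ'(z₀)`, and in terms of the Taylor coefficients `aₙ` of `f` at `z₀` this is
`(a₃ a₁ - a₂²) / a₁² = {f, z₀} / 6`.
-/

open Filter Topology FormalMultilinearSeries

variable {𝕜 : Type*} [NontriviallyNormedField 𝕜]

theorem inv_sub_sub_deriv_div_sub_eq_dslope_div {f : 𝕜 → 𝕜} {z₀ z : 𝕜} (hz : z ≠ z₀)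
    (hfz : dslope f z₀ z ≠ 0) :
    (z - z₀)⁻¹ - deriv f z₀ / (f z - f z₀) = dslope (dslope f z₀) z₀ z / dslope f z₀ z := by
  have hz' : z - z₀ ≠ 0 := sub_ne_zero.2 hz
  rw [dslope_of_ne _ hz, slope_def_field] at hfz
  rw [dslope_of_ne _ hz, slope_def_field, dslope_of_ne _ hz, slope_def_field, dslope_same]
  have hf : f z - f z₀ ≠ 0 := by simpa [hz'] using hfz
  field_simp

theorem hasDerivAt_inv_sub_sub_const_div_sub {f : 𝕜 → 𝕜} {f' c z₀ z : 𝕜} (hf : HasDerivAt f f' z)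
    (hz : z ≠ z₀) (hfz : f z ≠ f z₀) :
    HasDerivAt (fun w => (w - z₀)⁻¹ - c / (f w - f z₀))
      (f' * c / (f z - f z₀) ^ 2 - 1 / (z - z₀) ^ 2) z := by
  have h1 := ((hasDerivAt_id' z).sub_const z₀).fun_inv (sub_ne_zero.2 hz)
  have h2 := (hasDerivAt_const z c).fun_div (hf.sub_const (f z₀)) (sub_ne_zero.2 hfz)
  refine (h1.fun_sub h2).congr_deriv ?_
  ring

theorem eventually_hasDerivAt_dslope_dslope_div_dslope {f : 𝕜 → 𝕜} {z₀ : 𝕜}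
    (hf : ∀ᶠ z in 𝓝 z₀, DifferentiableAt 𝕜 f z) (hf' : deriv f z₀ ≠ 0) :
    ∀ᶠ z in 𝓝[≠] z₀, HasDerivAt (dslope (dslope f z₀) z₀ / dslope f z₀)
      (deriv f z * deriv f z₀ / (f z - f z₀) ^ 2 - 1 / (z - z₀) ^ 2) z := by
  have hg : ∀ᶠ z in 𝓝 z₀, dslope f z₀ z ≠ 0 :=
    (continuousAt_dslope_same.2 hf.self_of_nhds).eventually_ne (by rwa [dslope_same])
  have heq : ∀ᶠ z in 𝓝 z₀, z ≠ z₀ → (z - z₀)⁻¹ - deriv f z₀ / (f z - f z₀) =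
      (dslope (dslope f z₀) z₀ / dslope f z₀) z :=
    hg.mono fun z hgz hz => inv_sub_sub_deriv_div_sub_eq_dslope_div hz hgz
  rw [eventually_nhdsWithin_iff]
  filter_upwards [hf, hg, heq.eventually_nhds] with z hfz hgz heqz hz
  have hfz' : f z ≠ f z₀ := sub_ne_zero.1 <| by
    rw [← sub_smul_dslope]
    exact smul_ne_zero (sub_ne_zero.2 hz) hgz
  refine (hasDerivAt_inv_sub_sub_const_div_sub hfz.hasDerivAt hz hfz').congr_of_eventuallyEq ?_
  filter_upwards [heqz, eventually_ne_nhds hz] with w hw hwz using (hw hwz).symm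

namespace HasFPowerSeriesAt

variable {f : 𝕜 → 𝕜} {p : FormalMultilinearSeries 𝕜 𝕜 𝕜} {z₀ : 𝕜}

theorem dslope_same_eq_coeff_one (hp : HasFPowerSeriesAt f p z₀) : dslope f z₀ z₀ = p.coeff 1 :=
  (dslope_same f z₀).trans hp.deriv

theorem hasDerivAt_dslope_dslope_div_dslope (hp : HasFPowerSeriesAt f p z₀)
    (h1 : p.coeff 1 ≠ 0) :
    HasDerivAt (dslope (dslope f z₀) z₀ / dslope f z₀)
      ((p.coeff 3 * p.coeff 1 - p.coeff 2 ^ 2) / p.coeff 1 ^ 2) z₀ := by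
  have hg := hp.has_fpower_series_dslope_fslope
  have hk := hg.has_fpower_series_dslope_fslope
  have hg₀ := hp.dslope_same_eq_coeff_one
  have hk₀ := hg.dslope_same_eq_coeff_one
  refine (hk.hasDerivAt.div hg.hasDerivAt (hg₀ ▸ h1)).congr_deriv ?_
  rw [hg₀, hk₀]
  simp [coeff_fslope, sq]

theorem tendsto_deriv_mul_deriv_div_sub_sq_sub_one_div_sq [CompleteSpace 𝕜]
    (hp : HasFPowerSeriesAt f p z₀) (h1 : p.coeff 1 ≠ 0) :
    Tendsto (fun z => deriv f z * deriv f z₀ / (f z - f z₀) ^ 2 - 1 / (z - z₀) ^ 2) (𝓝[≠] z₀)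
      (𝓝 ((p.coeff 3 * p.coeff 1 - p.coeff 2 ^ 2) / p.coeff 1 ^ 2)) := by
  have hg := hp.has_fpower_series_dslope_fslope
  have hφ : AnalyticAt 𝕜 (dslope (dslope f z₀) z₀ / dslope f z₀) z₀ :=
    hg.has_fpower_series_dslope_fslope.analyticAt.div hg.analyticAt
      (hp.dslope_same_eq_coeff_one ▸ h1)
  have hlim := hφ.deriv.continuousAt.tendsto.mono_left (nhdsWithin_le_nhds (s := {z₀}ᶜ))
  rw [(hp.hasDerivAt_dslope_dslope_div_dslope h1).deriv] at hlim
  refine hlim.congr' ?_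
  have hf : ∀ᶠ z in 𝓝 z₀, DifferentiableAt 𝕜 f z :=
    hp.analyticAt.eventually_analyticAt.mono fun z hz => hz.differentiableAt
  filter_upwards [eventually_hasDerivAt_dslope_dslope_div_dslope hf (hp.deriv ▸ h1)]
    with z hz using hz.deriv

end HasFPowerSeriesAt

noncomputable def schwarzian (f : 𝕜 → 𝕜) (z : 𝕜) : 𝕜 :=
  deriv (deriv (deriv f)) z / deriv f z - 3 / 2 * (deriv (deriv f) z / deriv f z) ^ 2

theorem AnalyticAt.tendsto_deriv_mul_deriv_div_sub_sq_sub_one_div_sq [CompleteSpace 𝕜]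
    [CharZero 𝕜] {f : 𝕜 → 𝕜} {z₀ : 𝕜} (hf : AnalyticAt 𝕜 f z₀) (hf' : deriv f z₀ ≠ 0) :
    Tendsto (fun z => deriv f z * deriv f z₀ / (f z - f z₀) ^ 2 - 1 / (z - z₀) ^ 2) (𝓝[≠] z₀)
      (𝓝 (schwarzian f z₀ / 6)) := by
  have hcoeff (n : ℕ) : (ofScalars 𝕜 fun n => iteratedDeriv n f z₀ / n.factorial).coeff n =
      iteratedDeriv n f z₀ / n.factorial := coeff_ofScalars
  convert hf.hasFPowerSeriesAt.tendsto_deriv_mul_deriv_div_sub_sq_sub_one_div_sq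
    (by simpa [hcoeff] using hf') using 2
  simp only [schwarzian, hcoeff, iteratedDeriv_succ, iteratedDeriv_zero, Nat.factorial]
  field_simp
  ring

/-- Schwarzian short-distance expansion. If `f` is holomorphic on
an open set `U ∋ z₀` with `f′(z₀) ≠ 0`, then
`f′(z) f′(z₀)/(f(z) − f(z₀))² − 1/(z − z₀)² → (1/6){f, z₀}` as `z → z₀`,
where `{f,z} = f‴/f′ − (3/2)(f″/f′)²` is the Schwarzian derivative. -/
theorem schwarzian_short_distance_expansion
    (U : Set ℂ) (hU : IsOpen U) (z₀ : ℂ) (hz : z₀ ∈ U)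
    (f : ℂ → ℂ) (hf : DifferentiableOn ℂ f U) (hf' : deriv f z₀ ≠ 0) :
    Filter.Tendsto
      (fun z => deriv f z * deriv f z₀ / (f z - f z₀) ^ 2 - 1 / (z - z₀) ^ 2)
      (nhdsWithin z₀ {z₀}ᶜ)
      (nhds ((1 / 6) * (deriv (deriv (deriv f)) z₀ / deriv f z₀
        - (3 / 2) * (deriv (deriv f) z₀ / deriv f z₀) ^ 2))) := by
  convert (hf.analyticAt (hU.mem_nhds hz)).tendsto_deriv_mul_deriv_div_sub_sq_sub_one_div_sq hf'
    using 2
  rw [schwarzian]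
  ring
end

section
/- For k ∈ (0,1), let K(k) = ∫₀¹ dx/√((1−x²)(1−k²x²)) and E(k) = ∫₀¹ √((1−k²x²)/(1−x²)) dx (convergent improper integrals). Then the function k ↦ K(k) is differentiable on (0,1) and dK/dk = E(k)/(k(1−k²)) − K(k)/k. -/
/-!
Differentiating under the integral sign (for `t` near `k` the `t`-derivative of the integrand is
dominated by `C / √(1 - x)`) gives `K'(k) = ∫₀¹ k x² / (√(1 - x²) (1 - k²x²)^(3/2)) dx`.
Pointwise, the `E`-integrand minus `(1 - k²)` times the `K`-integrand minus `k(1 - k²)` times this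
integrand equals `k²` times the derivative of `x √(1 - x²) / √(1 - k²x²)`, which vanishes at both
ends; hence `k (1 - k²) K'(k) = E(k) - (1 - k²) K(k)`.
-/

open MeasureTheory Set
open scoped Interval

lemma ae_uIoc_zero_one_of_forall_Ioo {P : ℝ → Prop} (h : ∀ x ∈ Ioo (0 : ℝ) 1, P x) :
    ∀ᵐ x, x ∈ Ι (0 : ℝ) 1 → P x := by
  rw [uIoc_of_le zero_le_one]
  filter_upwards [Ioo_ae_eq_Ioc (μ := volume) (a := (0 : ℝ)) (b := 1)] with x hx hmem
  exact h x (hx.mpr hmem)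

lemma intervalIntegrable_inv_sqrt_one_sub :
    IntervalIntegrable (fun x : ℝ => (√(1 - x))⁻¹) volume 0 1 := by
  have h := (intervalIntegral.intervalIntegrable_rpow' (a := 0) (b := 1)
    (r := -(1 / 2)) (by norm_num)).comp_sub_left 1
  simp only [sub_zero, sub_self] at h
  refine h.symm.congr fun x hx => ?_
  rw [uIoc_of_le zero_le_one] at hx
  rw [Real.rpow_neg (by linarith [hx.2]), ← Real.sqrt_eq_rpow]

lemma intervalIntegrable_of_abs_le_mul_inv_sqrt_one_sub {f : ℝ → ℝ} {C : ℝ} (hf : Measurable f)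
    (h : ∀ x ∈ Ioo (0 : ℝ) 1, |f x| ≤ C * (√(1 - x))⁻¹) :
    IntervalIntegrable f volume 0 1 :=
  (intervalIntegrable_inv_sqrt_one_sub.const_mul C).mono_fun' hf.aestronglyMeasurable <|
    (ae_restrict_iff' measurableSet_uIoc).2 (ae_uIoc_zero_one_of_forall_Ioo h)

lemma abs_div_sqrt_mul_sqrt_pow_le {p C s t x : ℝ} (n : ℕ) (hp : |p| ≤ C) (hs : s < 1)
    (ht : t ^ 2 ≤ s) (hx : x ∈ Ioo (0 : ℝ) 1) :
    |p / (√(1 - x ^ 2) * √(1 - t ^ 2 * x ^ 2) ^ n)| ≤ C / √(1 - s) ^ n * (√(1 - x))⁻¹ := by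
  obtain ⟨hx0, hx1⟩ := hx
  have hlow : √(1 - x) * √(1 - s) ^ n ≤ √(1 - x ^ 2) * √(1 - t ^ 2 * x ^ 2) ^ n := by
    have hx2 : x ^ 2 ≤ 1 := by nlinarith
    gcongr
    · nlinarith
    · nlinarith [mul_le_mul_of_nonneg_left hx2 (sq_nonneg t)]
  have hpos : 0 < √(1 - x) * √(1 - s) ^ n := by
    have : 0 < 1 - s := by linarith
    have : 0 < 1 - x := by linarith
    positivity
  calc |p / (√(1 - x ^ 2) * √(1 - t ^ 2 * x ^ 2) ^ n)|
      = |p| / (√(1 - x ^ 2) * √(1 - t ^ 2 * x ^ 2) ^ n) := by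
        rw [abs_div, abs_of_nonneg (a := _ * _) (by positivity)]
    _ ≤ C / (√(1 - x) * √(1 - s) ^ n) := div_le_div₀ ((abs_nonneg p).trans hp) hp hpos hlow
    _ = C / √(1 - s) ^ n * (√(1 - x))⁻¹ := by field_simp

lemma intervalIntegrable_div_sqrt_mul_sqrt_pow {p : ℝ → ℝ} {C k : ℝ} (n : ℕ)
    (hp_meas : Measurable p) (hp : ∀ x ∈ Ioo (0 : ℝ) 1, |p x| ≤ C) (hk : k ^ 2 < 1) :
    IntervalIntegrable (fun x => p x / (√(1 - x ^ 2) * √(1 - k ^ 2 * x ^ 2) ^ n)) volume 0 1 :=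
  intervalIntegrable_of_abs_le_mul_inv_sqrt_one_sub (by fun_prop) fun x hx =>
    abs_div_sqrt_mul_sqrt_pow_le n (hp x hx) hk le_rfl hx

lemma intervalIntegrable_one_div_sqrt_mul {k : ℝ} (hk : k ^ 2 < 1) :
    IntervalIntegrable (fun x => 1 / √((1 - x ^ 2) * (1 - k ^ 2 * x ^ 2))) volume 0 1 := by
  refine intervalIntegrable_of_abs_le_mul_inv_sqrt_one_sub (C := 1 / √(1 - k ^ 2) ^ 1)
    (by fun_prop) fun x hx => ?_
  have h := abs_div_sqrt_mul_sqrt_pow_le 1 abs_one.le hk le_rfl hx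
  rwa [pow_one, ← Real.sqrt_mul (by nlinarith [hx.1, hx.2])] at h

lemma intervalIntegrable_sqrt_div (k : ℝ) :
    IntervalIntegrable (fun x => √((1 - k ^ 2 * x ^ 2) / (1 - x ^ 2))) volume 0 1 := by
  refine intervalIntegrable_of_abs_le_mul_inv_sqrt_one_sub (C := 1) (by fun_prop) fun x hx => ?_
  obtain ⟨hx0, hx1⟩ := hx
  rw [abs_of_nonneg (Real.sqrt_nonneg _), one_mul, ← Real.sqrt_inv]
  gcongr
  calc (1 - k ^ 2 * x ^ 2) / (1 - x ^ 2) ≤ 1 / (1 - x ^ 2) := by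
        gcongr
        · nlinarith
        · nlinarith [sq_nonneg (k * x)]
    _ ≤ (1 - x)⁻¹ := by
        rw [one_div]
        gcongr
        nlinarith

lemma hasDerivAt_one_div_sqrt_mul {x t : ℝ} (hx : x ^ 2 < 1) (ht : t ^ 2 * x ^ 2 < 1) :
    HasDerivAt (fun s => 1 / √((1 - x ^ 2) * (1 - s ^ 2 * x ^ 2)))
      (t * x ^ 2 / (√(1 - x ^ 2) * √(1 - t ^ 2 * x ^ 2) ^ 3)) t := by
  have hu : 0 < 1 - x ^ 2 := by linarith
  have hv : 0 < 1 - t ^ 2 * x ^ 2 := by linarith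
  have hsplit : (fun s => 1 / √((1 - x ^ 2) * (1 - s ^ 2 * x ^ 2)))
      = fun s => (√(1 - x ^ 2))⁻¹ * (√(1 - s ^ 2 * x ^ 2))⁻¹ := by
    funext s
    rw [Real.sqrt_mul hu.le, one_div, mul_inv]
  have hinner : HasDerivAt (fun s => 1 - s ^ 2 * x ^ 2) (-(2 * t * x ^ 2)) t := by
    simpa using ((hasDerivAt_pow 2 t).mul_const (x ^ 2)).const_sub 1
  rw [hsplit]
  refine (((hinner.sqrt hv.ne').inv (Real.sqrt_pos.2 hv).ne').const_mul _).congr_deriv ?_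
  have ha0 := Real.sqrt_pos.2 hu
  have hb0 := Real.sqrt_pos.2 hv
  field_simp

lemma hasDerivAt_mul_sqrt_div_sqrt {k x : ℝ} (hx : x ^ 2 < 1) (hkx : k ^ 2 * x ^ 2 < 1) :
    HasDerivAt (fun y => y * √(1 - y ^ 2) / √(1 - k ^ 2 * y ^ 2))
      (((1 - x ^ 2) * (1 - k ^ 2 * x ^ 2) - (1 - k ^ 2) * x ^ 2) /
        (√(1 - x ^ 2) * √(1 - k ^ 2 * x ^ 2) ^ 3)) x := by
  have hu : 0 < 1 - x ^ 2 := by linarith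
  have hv : 0 < 1 - k ^ 2 * x ^ 2 := by linarith
  have hnum : HasDerivAt (fun y => 1 - y ^ 2) (-(2 * x)) x := by
    simpa using (hasDerivAt_pow 2 x).const_sub 1
  have hden : HasDerivAt (fun y => 1 - k ^ 2 * y ^ 2) (-(2 * k ^ 2 * x)) x := by
    simpa [mul_assoc, mul_left_comm] using ((hasDerivAt_pow 2 x).const_mul (k ^ 2)).const_sub 1
  refine (((hasDerivAt_id x).mul (hnum.sqrt hu.ne')).div (hden.sqrt hv.ne')
    (Real.sqrt_pos.2 hv).ne').congr_deriv ?_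
  have ha : √(1 - x ^ 2) ^ 2 = 1 - x ^ 2 := Real.sq_sqrt hu.le
  have hb : √(1 - k ^ 2 * x ^ 2) ^ 2 = 1 - k ^ 2 * x ^ 2 := Real.sq_sqrt hv.le
  have ha0 := Real.sqrt_pos.2 hu
  have hb0 := Real.sqrt_pos.2 hv
  simp only [Pi.mul_apply, id_eq]
  generalize √(1 - x ^ 2) = a at *
  generalize √(1 - k ^ 2 * x ^ 2) = b at *
  field_simp
  linear_combination (b ^ 2 + k ^ 2 * x ^ 2) * ha + (1 - 2 * x ^ 2) * hb

lemma integral_deriv_mul_sqrt_div_sqrt_eq_zero {k : ℝ} (hk : k ^ 2 < 1) :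
    ∫ x in (0 : ℝ)..1, ((1 - x ^ 2) * (1 - k ^ 2 * x ^ 2) - (1 - k ^ 2) * x ^ 2) /
      (√(1 - x ^ 2) * √(1 - k ^ 2 * x ^ 2) ^ 3) = 0 := by
  have hkx : ∀ x ∈ Icc (0 : ℝ) 1, k ^ 2 * x ^ 2 < 1 := fun x hx => by
    nlinarith [mul_le_mul_of_nonneg_left (pow_le_one₀ hx.1 hx.2 : x ^ 2 ≤ 1) (sq_nonneg k)]
  have hcont : ContinuousOn (fun y => y * √(1 - y ^ 2) / √(1 - k ^ 2 * y ^ 2)) (Icc 0 1) :=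
    ContinuousOn.div (by fun_prop) (by fun_prop) fun x hx =>
      (Real.sqrt_pos.2 (by linarith [hkx x hx])).ne'
  have hbound : ∀ x ∈ Ioo (0 : ℝ) 1,
      |(1 - x ^ 2) * (1 - k ^ 2 * x ^ 2) - (1 - k ^ 2) * x ^ 2| ≤ 1 := fun x hx => by
    have := hkx x (Ioo_subset_Icc_self hx)
    rw [abs_le]
    constructor <;> nlinarith [hx.1, hx.2, sq_nonneg x, sq_nonneg (k * x)]
  rw [intervalIntegral.integral_eq_sub_of_hasDerivAt_of_le zero_le_one hcont
    (fun x hx => hasDerivAt_mul_sqrt_div_sqrt (by nlinarith [hx.1, hx.2])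
      (hkx x (Ioo_subset_Icc_self hx)))
    (intervalIntegrable_div_sqrt_mul_sqrt_pow 3 (by fun_prop) hbound hk)]
  simp

lemma elliptic_integrands_relation {k x : ℝ} (hx : x ^ 2 < 1) (hkx : k ^ 2 * x ^ 2 < 1) :
    √((1 - k ^ 2 * x ^ 2) / (1 - x ^ 2))
      - (1 - k ^ 2) * (1 / √((1 - x ^ 2) * (1 - k ^ 2 * x ^ 2)))
      - k * (1 - k ^ 2) * (k * x ^ 2 / (√(1 - x ^ 2) * √(1 - k ^ 2 * x ^ 2) ^ 3))
    = k ^ 2 * (((1 - x ^ 2) * (1 - k ^ 2 * x ^ 2) - (1 - k ^ 2) * x ^ 2) /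
        (√(1 - x ^ 2) * √(1 - k ^ 2 * x ^ 2) ^ 3)) := by
  have hu : 0 < 1 - x ^ 2 := by linarith
  have hv : 0 < 1 - k ^ 2 * x ^ 2 := by linarith
  have hb := Real.sq_sqrt hv.le
  have ha0 := Real.sqrt_pos.2 hu
  have hb0 := Real.sqrt_pos.2 hv
  rw [Real.sqrt_div hv.le, Real.sqrt_mul hu.le]
  generalize √(1 - x ^ 2) = a at *
  generalize √(1 - k ^ 2 * x ^ 2) = b at *
  field_simp
  linear_combination (b ^ 2 - k ^ 2 * x ^ 2 + k ^ 2) * hb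

lemma mul_integral_deriv_eq_sub {k : ℝ} (hk : k ^ 2 < 1) :
    k * (1 - k ^ 2) * ∫ x in (0 : ℝ)..1, k * x ^ 2 / (√(1 - x ^ 2) * √(1 - k ^ 2 * x ^ 2) ^ 3)
      = (∫ x in (0 : ℝ)..1, √((1 - k ^ 2 * x ^ 2) / (1 - x ^ 2)))
        - (1 - k ^ 2) * ∫ x in (0 : ℝ)..1, 1 / √((1 - x ^ 2) * (1 - k ^ 2 * x ^ 2)) := by
  have hE := intervalIntegrable_sqrt_div k
  have hK := intervalIntegrable_one_div_sqrt_mul hk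
  have hD : IntervalIntegrable
      (fun x => k * x ^ 2 / (√(1 - x ^ 2) * √(1 - k ^ 2 * x ^ 2) ^ 3)) volume 0 1 :=
    intervalIntegrable_div_sqrt_mul_sqrt_pow (C := 1) 3 (by fun_prop) (fun x hx => by
      rw [abs_mul, abs_of_nonneg (sq_nonneg x)]
      have : x ^ 2 < 1 := by nlinarith [hx.1, hx.2]
      nlinarith [abs_nonneg k, (sq_lt_one_iff_abs_lt_one k).1 hk]) hk
  have hcomb : ∫ x in (0 : ℝ)..1, (√((1 - k ^ 2 * x ^ 2) / (1 - x ^ 2))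
      - (1 - k ^ 2) * (1 / √((1 - x ^ 2) * (1 - k ^ 2 * x ^ 2)))
      - k * (1 - k ^ 2) * (k * x ^ 2 / (√(1 - x ^ 2) * √(1 - k ^ 2 * x ^ 2) ^ 3))) = 0 := by
    rw [intervalIntegral.integral_congr_ae (ae_uIoc_zero_one_of_forall_Ioo fun x hx =>
      elliptic_integrands_relation (by nlinarith [hx.1, hx.2]) (by nlinarith [hx.1, hx.2])),
      intervalIntegral.integral_const_mul, integral_deriv_mul_sqrt_div_sqrt_eq_zero hk, mul_zero]
  rw [intervalIntegral.integral_sub (hE.sub (hK.const_mul _)) (hD.const_mul _),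
    intervalIntegral.integral_sub hE (hK.const_mul _), intervalIntegral.integral_const_mul,
    intervalIntegral.integral_const_mul] at hcomb
  linarith

lemma hasDerivAt_integral_one_div_sqrt_mul {k : ℝ} (hk : k ^ 2 < 1) :
    HasDerivAt (fun t => ∫ x in (0 : ℝ)..1, 1 / √((1 - x ^ 2) * (1 - t ^ 2 * x ^ 2)))
      (∫ x in (0 : ℝ)..1, k * x ^ 2 / (√(1 - x ^ 2) * √(1 - k ^ 2 * x ^ 2) ^ 3)) k := by
  have hk' : |k| < 1 := (sq_lt_one_iff_abs_lt_one k).1 hk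
  set m := (1 + |k|) / 2 with hm_def
  have hm : m ^ 2 < 1 := by nlinarith [abs_nonneg k]
  have hnhds : Ioo (-m) m ∈ nhds k :=
    Ioo_mem_nhds (by linarith [neg_abs_le k]) (by linarith [le_abs_self k])
  have hsq : ∀ t ∈ Ioo (-m) m, t ^ 2 ≤ m ^ 2 := fun t ht => sq_le_sq' ht.1.le ht.2.le
  refine (intervalIntegral.hasDerivAt_integral_of_dominated_loc_of_deriv_le
    (F := fun t x => 1 / √((1 - x ^ 2) * (1 - t ^ 2 * x ^ 2)))
    (F' := fun t x => t * x ^ 2 / (√(1 - x ^ 2) * √(1 - t ^ 2 * x ^ 2) ^ 3))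
    (bound := fun x => 1 / √(1 - m ^ 2) ^ 3 * (√(1 - x))⁻¹) hnhds
    (Filter.Eventually.of_forall fun t => (by fun_prop : Measurable _).aestronglyMeasurable)
    (intervalIntegrable_one_div_sqrt_mul hk)
    (by fun_prop : Measurable _).aestronglyMeasurable ?_
    (intervalIntegrable_inv_sqrt_one_sub.const_mul _) ?_).2
  · refine ae_uIoc_zero_one_of_forall_Ioo fun x hx t ht => ?_
    refine abs_div_sqrt_mul_sqrt_pow_le 3 ?_ hm (hsq t ht) hx
    rw [abs_mul, abs_of_nonneg (sq_nonneg x)]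
    have : x ^ 2 < 1 := by nlinarith [hx.1, hx.2]
    have : |t| < 1 := by rw [abs_lt]; constructor <;> nlinarith [ht.1, ht.2]
    nlinarith [abs_nonneg t]
  · refine ae_uIoc_zero_one_of_forall_Ioo fun x hx t ht => ?_
    exact hasDerivAt_one_div_sqrt_mul (by nlinarith [hx.1, hx.2])
      (by nlinarith [hsq t ht, hx.1, hx.2])

/-- Derivative of the complete elliptic integral of the first kind:
for `k ∈ (0,1)`, `dK/dk = E(k)/(k(1−k²)) − K(k)/k`. -/
theorem deriv_complete_elliptic_K
    (K E : ℝ → ℝ)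
    (hK : ∀ k : ℝ, K k = ∫ x in (0:ℝ)..1, 1 / Real.sqrt ((1 - x ^ 2) * (1 - k ^ 2 * x ^ 2)))
    (hE : ∀ k : ℝ, E k = ∫ x in (0:ℝ)..1, Real.sqrt ((1 - k ^ 2 * x ^ 2) / (1 - x ^ 2))) :
    ∀ k : ℝ, 0 < k → k < 1 →
      HasDerivAt K (E k / (k * (1 - k ^ 2)) - K k / k) k := by
  intro k hk0 hk1
  have hk : k ^ 2 < 1 := by nlinarith
  have hderiv := hasDerivAt_integral_one_div_sqrt_mul hk
  have hid := mul_integral_deriv_eq_sub hk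
  rw [← funext hK] at hderiv
  rw [← hK, ← hE] at hid
  convert hderiv using 1
  have : 1 - k ^ 2 ≠ 0 := by linarith
  field_simp
  linarith
end
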